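/- Let D be an integral domain and X an indeterminate over D. Then D[X] is condensed if and only if D is a field. -/
import Mathlib

/-- An integral domain is condensed if for every pair of nonzero ideals `I, J`,
the product `I*J` equals the set of products `{i*j : i ∈ I, j ∈ J}`. -/
def IsCondensed (D : Type*) [CommRing D] : Prop :=
  ∀ I J : Ideal D, I ≠ ⊥ → J ≠ ⊥ → ∀ x ∈ I * J, ∃ i ∈ I, ∃ j ∈ J, x = i * j

open Polynomial

theorem stmt13 (D : Type*) [CommRing D] [IsDomain D] :
    IsCondensed (Polynomial D) ↔ IsField D := by
  constructor
  · intro h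
    refine ⟨exists_pair_ne D, mul_comm, ?_⟩
    intro a ha
    set I : Ideal (Polynomial D) := Ideal.comap (evalRingHom 0) (Ideal.span {a}) with hIdef
    set J : Ideal (Polynomial D) := Ideal.comap (evalRingHom 1) (Ideal.span {a}) with hJdef
    have hXI : (X : Polynomial D) ∈ I := by
      simp [hIdef, Ideal.mem_comap]
    have hXJ : (X - 1 : Polynomial D) ∈ J := by
      simp [hJdef, Ideal.mem_comap]
    have haI : (C a : Polynomial D) ∈ I := by
      simp [hIdef, Ideal.mem_comap, Ideal.mem_span_singleton]
    have haJ : (C a : Polynomial D) ∈ J := by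
      simp [hJdef, Ideal.mem_comap, Ideal.mem_span_singleton]
    have hI : I ≠ ⊥ := by
      intro hbot
      have := hbot ▸ hXI
      simp [Ideal.mem_bot, X_ne_zero] at this
    have hJ : J ≠ ⊥ := by
      intro hbot
      rw [hbot] at hXJ
      exact X_sub_C_ne_zero (1 : D) (by simpa [Ideal.mem_bot, C_1] using hXJ)
    have hmem : (C a : Polynomial D) ∈ I * J := by
      have h1 : (X * C a : Polynomial D) ∈ I * J := Ideal.mul_mem_mul hXI haJ
      have h2 : (C a * (X - 1) : Polynomial D) ∈ I * J := Ideal.mul_mem_mul haI hXJ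
      have heq : (C a : Polynomial D) = X * C a - C a * (X - 1) := by ring
      rw [heq]
      exact Submodule.sub_mem _ h1 h2
    obtain ⟨f, hfI, g, hgJ, hfg⟩ := h I J hI hJ _ hmem
    have hCa : (C a : Polynomial D) ≠ 0 := by simpa using ha
    have hf0 : f ≠ 0 := by rintro rfl; simp at hfg; exact hCa (by simp [hfg])
    have hg0 : g ≠ 0 := by rintro rfl; simp at hfg; exact hCa (by simp [hfg])
    have hdeg : f.natDegree + g.natDegree = 0 := by
      have := natDegree_mul hf0 hg0
      rw [← hfg] at this
      simpa using this.symm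
    obtain ⟨c, rfl⟩ := natDegree_eq_zero.mp (Nat.eq_zero_of_add_eq_zero_right hdeg)
    obtain ⟨e, rfl⟩ := natDegree_eq_zero.mp (Nat.eq_zero_of_add_eq_zero_left hdeg)
    have hce : c * e = a := by
      have := hfg
      rw [← C_mul] at this
      exact (C_injective this).symm
    have hcdvd : a ∣ c := by
      simpa [hIdef, Ideal.mem_comap, Ideal.mem_span_singleton] using hfI
    have hedvd : a ∣ e := by
      simpa [hJdef, Ideal.mem_comap, Ideal.mem_span_singleton] using hgJ
    obtain ⟨c', rfl⟩ := hcdvd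
    obtain ⟨e', rfl⟩ := hedvd
    have h1 : a * (a * (c' * e')) = a * 1 := by linear_combination hce
    exact ⟨c' * e', mul_left_cancel₀ ha h1⟩
  · intro hf
    letI := hf.toField
    intro I J _ _ x hx
    obtain ⟨p, hp⟩ := (IsPrincipalIdealRing.principal I).principal
    obtain ⟨q, hq⟩ := (IsPrincipalIdealRing.principal J).principal
    rw [Ideal.submodule_span_eq] at hp hq
    rw [hp, hq] at hx ⊢
    rw [Ideal.span_singleton_mul_span_singleton, Ideal.mem_span_singleton] at hx
    obtain ⟨c, hc⟩ := hx
    exact ⟨p * c, Ideal.mem_span_singleton.mpr ⟨c, rfl⟩, q,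
      Ideal.mem_span_singleton_self q, by rw [hc]; ring⟩
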